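/- arXiv:1609.03589 — 2 statements merged into one kernel-verified Lean document; each statement's English description precedes it below -/
import Mathlib

section
/- Suppose {mⁱ}_{i=1}^∞ is a sequence of nonnegative reals with Σ mⁱ = M < ∞, and suppose strict concavity: f''(m) < 0 for all m ∈ (0, m̄) where f is twice differentiable on (0,∞). If the sequence minimizes Σ f(mⁱ) among all such decompositions of M, then at most one of the mⁱ lies in the open interval (0, m̄). Consequently, if all mⁱ > 0, the number of nonzero terms is finite (at most 1 + M/m̄). -/
/-!
Since `∑ mⁱ < ∞`, only finitely many masses reach `m̄`, so everything rests on showing that two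
masses `x ≤ y` in `(0, m̄)` cannot coexist. Moving a small amount `ε` from the smaller to the larger
one keeps the total mass and, by strict concavity, replaces `f x + f y` by the strictly smaller
`f (x - ε) + f (y + ε)`, contradicting minimality.
-/

open Function Set

theorem StrictConcaveOn.map_add_map_lt_of_add_eq {s : Set ℝ} {f : ℝ → ℝ}
    (hf : StrictConcaveOn ℝ s f) {a b x y : ℝ} (ha : a ∈ s) (hb : b ∈ s) (hax : a < x)
    (hay : a < y) (hsum : a + b = x + y) : f a + f b < f x + f y := by
  have hab : 0 < b - a := by linarith
  set t := (x - a) / (b - a)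
  have ht : t * (b - a) = x - a := div_mul_cancel₀ _ hab.ne'
  have ht₀ : 0 < t := div_pos (by linarith) hab
  have ht₁ : t < 1 := (div_lt_one hab).2 (by linarith)
  have hx := hf.2 ha hb (by linarith : a ≠ b) (by linarith : 0 < 1 - t) ht₀ (by ring)
  have hy := hf.2 ha hb (by linarith : a ≠ b) ht₀ (by linarith : 0 < 1 - t) (by ring)
  simp only [smul_eq_mul] at hx hy
  rw [show (1 - t) * a + t * b = x by linarith] at hx
  rw [show t * a + (1 - t) * b = y by linarith] at hy
  linarith

theorem StrictConcaveOn.exists_spread_lt {c : ℝ} {f : ℝ → ℝ} (hf : StrictConcaveOn ℝ (Ioo 0 c) f)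
    {x y : ℝ} (hx : x ∈ Ioo 0 c) (hy : y ∈ Ioo 0 c) (hxy : x ≤ y) :
    ∃ ε, x - ε ∈ Ioo 0 c ∧ y + ε ∈ Ioo 0 c ∧ f (x - ε) + f (y + ε) < f x + f y := by
  set ε := min x (c - y) / 2 with hε_def
  have hε : 0 < ε := half_pos (lt_min hx.1 (by linarith [hy.2]))
  have hεx : ε < x := by linarith [min_le_left x (c - y)]
  have hεy : y + ε < c := by linarith [min_le_right x (c - y)]
  have hxε : x - ε ∈ Ioo 0 c := ⟨by linarith, by linarith [hx.2]⟩
  have hyε : y + ε ∈ Ioo 0 c := ⟨by linarith [hy.1], hεy⟩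
  exact ⟨ε, hxε, hyε, hf.map_add_map_lt_of_add_eq hxε hyε (by linarith) (by linarith) (by ring)⟩

theorem HasSum.update_update {ι α : Type*} [DecidableEq ι] [AddCommGroup α] [TopologicalSpace α]
    [IsTopologicalAddGroup α] {g : ι → α} {S : α} (h : HasSum g S) {i j : ι} (hij : i ≠ j)
    (x y : α) :
    HasSum (Function.update (Function.update g i x) j y) (S - g i - g j + x + y) := by
  convert (h.update i x).update j y using 1
  rw [update_of_ne hij.symm]
  abel

theorem subsingleton_setOf_mem_Ioo_of_minimal {ι : Type*} {F : ℝ → ℝ} {c : ℝ}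
    (hF : StrictConcaveOn ℝ (Ioo 0 c) F) {m : ι → ℝ} (hm : ∀ i, 0 ≤ m i) (hsum : Summable m)
    (hFm : Summable (F ∘ m))
    (hmin : ∀ mt : ι → ℝ, (∀ i, 0 ≤ mt i) → Summable mt → ∑' i, mt i = ∑' i, m i →
      Summable (F ∘ mt) → ∑' i, F (m i) ≤ ∑' i, F (mt i)) :
    {i | m i ∈ Ioo 0 c}.Subsingleton := by
  intro i hi j hj
  by_contra hij
  wlog hle : m i ≤ m j generalizing i j
  · exact this hj hi (Ne.symm hij) (le_of_not_ge hle)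
  classical
  obtain ⟨ε, hiε, hjε, hlt⟩ := hF.exists_spread_lt hi hj hle
  set mt := update (update m i (m i - ε)) j (m j + ε)
  have hmt : HasSum mt (∑' k, m k) := by
    have h := hsum.hasSum.update_update hij (m i - ε) (m j + ε)
    rwa [show ∑' k, m k - m i - m j + (m i - ε) + (m j + ε) = ∑' k, m k by ring] at h
  have hFmt : HasSum (F ∘ mt)
      (∑' k, F (m k) - F (m i) - F (m j) + F (m i - ε) + F (m j + ε)) := by
    rw [comp_update, comp_update]
    exact hFm.hasSum.update_update hij _ _
  have hmt_nonneg : ∀ k, 0 ≤ mt k := by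
    intro k
    simp only [mt, update_apply]
    split_ifs
    exacts [hjε.1.le, hiε.1.le, hm k]
  have hle := hmin mt hmt_nonneg hmt.summable hmt.tsum_eq hFmt.summable
  rw [show ∑' k, F (mt k) = _ from hFmt.tsum_eq] at hle
  linarith

theorem Summable.finite_support_of_subsingleton_Ioo {ι : Type*} {m : ι → ℝ} {c : ℝ}
    (hsum : Summable m) (hm : ∀ i, 0 ≤ m i) (hc : 0 < c)
    (h : {i | m i ∈ Ioo 0 c}.Subsingleton) : (support m).Finite := by
  have hlarge : {i | ¬m i < c}.Finite :=
    Filter.eventually_cofinite.1 (hsum.tendsto_cofinite_zero.eventually_lt_const hc)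
  refine (h.finite.union hlarge).subset fun i hi => ?_
  by_cases hic : m i < c
  · exact Or.inl ⟨(hm i).lt_of_ne' hi, hic⟩
  · exact Or.inr hic

/-- If a nonnegative sequence `m` sums to `M` and minimizes `Σ f(mⁱ)` (sum over
nonzero terms) among all nonnegative decompositions of `M`, where `f` is twice
continuously differentiable on `(0,∞)` with `f'' < 0` on `(0, m̄)`, then at most one
`mⁱ` lies in `(0, m̄)`, and the set of nonzero terms is finite. -/
theorem stmt4 (f : ℝ → ℝ) (mbar M : ℝ) (hmbar : 0 < mbar)
    (hf : ContDiffOn ℝ 2 f (Set.Ioi 0))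
    (hconc : ∀ x : ℝ, 0 < x → x < mbar → deriv (deriv f) x < 0)
    (m : ℕ → ℝ) (hpos : ∀ i, 0 ≤ m i) (hsum : Summable m) (hM : (∑' i, m i) = M)
    (hfs : Summable fun i => if m i = 0 then 0 else f (m i))
    (hmin : ∀ mt : ℕ → ℝ, (∀ i, 0 ≤ mt i) → Summable mt → (∑' i, mt i) = M →
      (Summable fun i => if mt i = 0 then 0 else f (mt i)) →
      (∑' i, if m i = 0 then 0 else f (m i)) ≤ ∑' i, if mt i = 0 then 0 else f (mt i)) :
    (∀ i j, i ≠ j → ¬(m i ∈ Set.Ioo 0 mbar ∧ m j ∈ Set.Ioo 0 mbar)) ∧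
      {i | m i ≠ 0}.Finite := by
  have hobj : ∀ μ : ℕ → ℝ, (fun i => if μ i = 0 then 0 else f (μ i)) = update f 0 0 ∘ μ :=
    fun μ => funext fun i => (update_apply f 0 0 (μ i)).symm
  simp only [hobj] at hfs hmin
  subst hM
  have hconcave : StrictConcaveOn ℝ (Ioo 0 mbar) (update f 0 0) := by
    refine (strictConcaveOn_of_deriv2_neg (convex_Ioo 0 mbar)
      (hf.continuousOn.mono Ioo_subset_Ioi_self) fun x hx => ?_).congr fun x hx => ?_
    · rw [interior_Ioo] at hx
      simpa using hconc x hx.1 hx.2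
    · exact (update_of_ne hx.1.ne' 0 f).symm
  have hsub := subsingleton_setOf_mem_Ioo_of_minimal hconcave hpos hsum hfs hmin
  exact ⟨fun i j hij h => hij (hsub h.1 h.2),
    hsum.finite_support_of_subsingleton_Ioo hpos hmbar hsub⟩
end

section
/- Let n ≥ 2, let m¹,…,mⁿ > 0, and define F(x₁,…,xₙ) = Σᵢ mⁱ q(xᵢ) + (1/(4π)) Σ_{i≠j} mⁱ mʲ / |xᵢ−xⱼ| on n-tuples of distinct points of ℝ³, where q(x) = ⟨Hx, x⟩ for a symmetric positive-definite 3×3 matrix H with ⟨Hx,x⟩ ≥ C|x|² for some C > 0. Then F is coercive (F → ∞ as max|xᵢ| → ∞ or as min_{i≠j}|xᵢ−xⱼ| → 0) and attains its infimum at some n-tuple of distinct points. -/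
/-!
Every term of `F` is nonnegative, so `F` dominates each single term: `C mᵢ ‖xᵢ‖²` and
`mᵢ mⱼ / (4π ‖xᵢ - xⱼ‖)`. Hence `F` blows up whenever one point escapes to infinity or two
points collide. A sublevel set of `F` therefore lies in a set of configurations that are bounded
and uniformly separated, which is compact inside the configuration space, so `F` is coercive;
being continuous on a nonempty space, it attains its minimum.
-/

open Filter Topology

abbrev ConfigSpace (ι E : Type*) := {x : ι → E // ∀ i j, i ≠ j → x i ≠ x j}

namespace ConfigSpace

variable {ι E : Type*} [NormedAddCommGroup E]

theorem isCompact_bounded_separated [ProperSpace E] {R δ : ℝ} (hδ : 0 < δ) :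
    IsCompact {x : ConfigSpace ι E |
      (∀ i, ‖x.1 i‖ ≤ R) ∧ ∀ i j, i ≠ j → δ ≤ ‖x.1 i - x.1 j‖} := by
  set K := Set.pi Set.univ (fun _ : ι => Metric.closedBall (0 : E) R) ∩
    {y : ι → E | ∀ i j, i ≠ j → δ ≤ ‖y i - y j‖}
  have hK : IsCompact K := by
    refine (isCompact_univ_pi fun _ => isCompact_closedBall 0 R).inter_right ?_
    simp only [Set.ofPred_forall]
    exact isClosed_iInter fun i => isClosed_iInter fun j => isClosed_iInter fun _ =>
      isClosed_le continuous_const (by fun_prop)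
  have hK_sub_range : K ⊆ Set.range (Subtype.val : ConfigSpace ι E → ι → E) := by
    intro y hy
    refine ⟨⟨y, fun i j hij hyij => ?_⟩, rfl⟩
    have hδ_le := hy.2 i j hij
    rw [hyij, sub_self, norm_zero] at hδ_le
    exact hδ.not_ge hδ_le
  have hpre : {x : ConfigSpace ι E | (∀ i, ‖x.1 i‖ ≤ R) ∧
      ∀ i j, i ≠ j → δ ≤ ‖x.1 i - x.1 j‖} = Subtype.val ⁻¹' K := by
    ext x
    simp [K]
  rw [hpre]
  exact (Topology.IsInducing.subtypeVal.isCompact_preimage_iff hK_sub_range).2 hK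

theorem tendsto_cocompact_atTop [ProperSpace E] [Finite ι] {f : ConfigSpace ι E → ℝ}
    (hfar : ∀ i, Tendsto f (comap (fun x => ‖x.1 i‖) atTop) atTop)
    (hnear : ∀ i j, i ≠ j → Tendsto f (comap (fun x => ‖x.1 i - x.1 j‖) (𝓝 0)) atTop) :
    Tendsto f (cocompact _) atTop := by
  rw [tendsto_atTop]
  intro b
  have hR : ∀ᶠ R in atTop, ∀ i, ∀ x : ConfigSpace ι E, R ≤ ‖x.1 i‖ → b ≤ f x := by
    refine eventually_all.2 fun i => ?_
    obtain ⟨R, -, hR⟩ := (atTop_basis.comap _).eventually_iff.1 (tendsto_atTop.1 (hfar i) b)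
    filter_upwards [eventually_ge_atTop R] with R' hR' x hx using hR (hR'.trans hx)
  have hδ : ∀ᶠ δ in 𝓝[>] 0, ∀ i j, i ≠ j → ∀ x : ConfigSpace ι E,
      ‖x.1 i - x.1 j‖ < δ → b ≤ f x := by
    refine eventually_all.2 fun i => eventually_all.2 fun j => ?_
    by_cases hij : i = j
    · exact Eventually.of_forall fun _ h => absurd hij h
    obtain ⟨ε, hε, hball⟩ := (Metric.nhds_basis_ball.comap _).eventually_iff.1
      (tendsto_atTop.1 (hnear i j hij) b)
    filter_upwards [Ioc_mem_nhdsGT hε] with δ hδε _ x hx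
    exact hball (by simpa using hx.trans_le hδε.2)
  obtain ⟨R, hR⟩ := hR.exists
  obtain ⟨δ, hδ, hδ_pos⟩ := (hδ.and self_mem_nhdsWithin).exists
  filter_upwards [(isCompact_bounded_separated (R := R) hδ_pos).compl_mem_cocompact] with x hx
  simp only [Set.mem_compl_iff, Set.mem_ofPred_eq, not_and_or, not_forall, not_le] at hx
  rcases hx with ⟨i, hi⟩ | ⟨i, j, hij, hij_near⟩
  · exact hR i x hi.le
  · exact hδ i j hij x hij_near

instance [Countable ι] [Infinite E] : Nonempty (ConfigSpace ι E) := by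
  obtain ⟨f, hf⟩ := Countable.exists_injective_nat ι
  exact ⟨⟨Infinite.natEmbedding E ∘ f,
    fun _ _ hij => ((Infinite.natEmbedding E).injective.comp hf).ne hij⟩⟩

end ConfigSpace

section CoulombTrapEnergy

variable {ι E : Type*} [DecidableEq ι] [NormedAddCommGroup E]

noncomputable def coulombTrapEnergy [Fintype ι] (m : ι → ℝ) (q : E → ℝ) (κ : ℝ)
    (x : ι → E) : ℝ :=
  (∑ i, m i * q (x i)) + κ * ∑ i, ∑ j, if i ≠ j then m i * m j / ‖x i - x j‖ else 0

variable {m : ι → ℝ} {q : E → ℝ} {κ : ℝ}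

theorem coulombTrapEnergy_pair_term_nonneg (hm : ∀ i, 0 ≤ m i) (x : ι → E) (i j : ι) :
    0 ≤ if i ≠ j then m i * m j / ‖x i - x j‖ else 0 := by
  split_ifs
  · exact div_nonneg (mul_nonneg (hm i) (hm j)) (norm_nonneg _)
  · exact le_rfl

variable [Fintype ι]

theorem mul_trap_le_coulombTrapEnergy (hm : ∀ i, 0 ≤ m i) (hq : ∀ v, 0 ≤ q v) (hκ : 0 ≤ κ)
    (x : ι → E) (i : ι) : m i * q (x i) ≤ coulombTrapEnergy m q κ x := by
  have htrap : m i * q (x i) ≤ ∑ i, m i * q (x i) :=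
    Finset.single_le_sum (fun k _ => mul_nonneg (hm k) (hq (x k))) (Finset.mem_univ i)
  have hpairs : 0 ≤ κ * ∑ i, ∑ j, if i ≠ j then m i * m j / ‖x i - x j‖ else 0 :=
    mul_nonneg hκ (Finset.sum_nonneg fun i _ => Finset.sum_nonneg fun j _ =>
      coulombTrapEnergy_pair_term_nonneg hm x i j)
  unfold coulombTrapEnergy
  linarith

theorem mul_interaction_le_coulombTrapEnergy (hm : ∀ i, 0 ≤ m i) (hq : ∀ v, 0 ≤ q v)
    (hκ : 0 ≤ κ) (x : ι → E) {i j : ι} (hij : i ≠ j) :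
    κ * (m i * m j / ‖x i - x j‖) ≤ coulombTrapEnergy m q κ x := by
  have hpair : m i * m j / ‖x i - x j‖ ≤
      ∑ i, ∑ j, if i ≠ j then m i * m j / ‖x i - x j‖ else 0 :=
    calc m i * m j / ‖x i - x j‖ = if i ≠ j then m i * m j / ‖x i - x j‖ else 0 :=
          (if_pos hij).symm
      _ ≤ ∑ j, if i ≠ j then m i * m j / ‖x i - x j‖ else 0 :=
          Finset.single_le_sum (fun k _ => coulombTrapEnergy_pair_term_nonneg hm x i k)
            (Finset.mem_univ j)
      _ ≤ _ := Finset.single_le_sum (f := fun i => ∑ j, _)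
          (fun k _ => Finset.sum_nonneg fun l _ => coulombTrapEnergy_pair_term_nonneg hm x k l)
          (Finset.mem_univ i)
  have htrap : 0 ≤ ∑ i, m i * q (x i) :=
    Finset.sum_nonneg fun k _ => mul_nonneg (hm k) (hq (x k))
  unfold coulombTrapEnergy
  nlinarith [mul_le_mul_of_nonneg_left hpair hκ]

theorem continuous_coulombTrapEnergy (hq : Continuous q) :
    Continuous fun x : ConfigSpace ι E => coulombTrapEnergy m q κ x.1 := by
  have hval : ∀ k, Continuous fun x : ConfigSpace ι E => x.1 k :=
    fun k => (continuous_apply k).comp continuous_subtype_val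
  unfold coulombTrapEnergy
  refine .add (continuous_finsetSum _ fun i _ => continuous_const.mul (hq.comp (hval i)))
    (continuous_const.mul (continuous_finsetSum _ fun i _ => continuous_finsetSum _ fun j _ => ?_))
  by_cases hij : i = j
  · simp only [hij, ne_eq, not_true_eq_false, if_false, continuous_const]
  simp only [ne_eq, hij, not_false_eq_true, if_true]
  exact continuous_const.div ((hval i).sub (hval j)).norm
    fun x => norm_ne_zero_iff.2 (sub_ne_zero.2 (x.2 i j hij))

theorem tendsto_coulombTrapEnergy_far (hm : ∀ i, 0 < m i) (hq0 : ∀ v, 0 ≤ q v)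
    (hq : Tendsto q (comap norm atTop) atTop) (hκ : 0 ≤ κ) (i : ι) :
    Tendsto (fun x : ConfigSpace ι E => coulombTrapEnergy m q κ x.1)
      (comap (fun x => ‖x.1 i‖) atTop) atTop := by
  refine tendsto_atTop_mono
    (fun x => mul_trap_le_coulombTrapEnergy (fun k => (hm k).le) hq0 hκ x.1 i) ?_
  exact (hq.comp (tendsto_comap_iff.2 tendsto_comap)).const_mul_atTop (hm i)

theorem tendsto_coulombTrapEnergy_near (hm : ∀ i, 0 < m i) (hq0 : ∀ v, 0 ≤ q v)
    (hκ : 0 < κ) {i j : ι} (hij : i ≠ j) :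
    Tendsto (fun x : ConfigSpace ι E => coulombTrapEnergy m q κ x.1)
      (comap (fun x => ‖x.1 i - x.1 j‖) (𝓝 0)) atTop := by
  refine tendsto_atTop_mono
    (fun x => mul_interaction_le_coulombTrapEnergy (fun k => (hm k).le) hq0 hκ.le x.1 hij) ?_
  have hdist : Tendsto (fun x : ConfigSpace ι E => ‖x.1 i - x.1 j‖)
      (comap (fun x => ‖x.1 i - x.1 j‖) (𝓝 0)) (𝓝[>] 0) :=
    tendsto_nhdsWithin_iff.2 ⟨tendsto_comap, Eventually.of_forall fun x =>
      norm_pos_iff.2 (sub_ne_zero.2 (x.2 i j hij))⟩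
  simp only [div_eq_mul_inv]
  exact ((tendsto_inv_nhdsGT_zero.comp hdist).const_mul_atTop
    (mul_pos (hm i) (hm j))).const_mul_atTop hκ

end CoulombTrapEnergy

theorem stmt5_general (n : ℕ) (m : Fin n → ℝ) (hm : ∀ i, 0 < m i)
    (H : Matrix (Fin 3) (Fin 3) ℝ)
    (q : EuclideanSpace ℝ (Fin 3) → ℝ)
    (hq : ∀ x, q x = ∑ k, ∑ l, H k l * x k * x l)
    (C : ℝ) (hC : 0 < C) (hcoer : ∀ x, C * ‖x‖ ^ 2 ≤ q x)
    (F : {x : Fin n → EuclideanSpace ℝ (Fin 3) // ∀ i j, i ≠ j → x i ≠ x j} → ℝ)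
    (hF : ∀ x, F x = (∑ i, m i * q (x.1 i)) +
      (4 * Real.pi)⁻¹ * ∑ i, ∑ j, if i ≠ j then m i * m j / ‖x.1 i - x.1 j‖ else 0) :
    Tendsto F (cocompact _) atTop ∧ ∃ x, ∀ y, F x ≤ F y := by
  obtain rfl : F = fun x => coulombTrapEnergy m q (4 * Real.pi)⁻¹ x.1 := funext hF
  have hq0 : ∀ v, 0 ≤ q v := fun v => (by positivity : 0 ≤ C * ‖v‖ ^ 2).trans (hcoer v)
  have hq_far : Tendsto q (comap norm atTop) atTop := tendsto_atTop_mono hcoer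
    (((tendsto_pow_atTop two_ne_zero).const_mul_atTop hC).comp tendsto_comap)
  have hq_cont : Continuous q := by rw [funext hq]; fun_prop
  have hκ : 0 < (4 * Real.pi)⁻¹ := by positivity
  have hcoercive := ConfigSpace.tendsto_cocompact_atTop
    (fun i => tendsto_coulombTrapEnergy_far hm hq0 hq_far hκ.le i)
    (fun i j hij => tendsto_coulombTrapEnergy_near hm hq0 hκ hij)
  exact ⟨hcoercive, (continuous_coulombTrapEnergy hq_cont).exists_forall_le hcoercive⟩

/-- The interaction energy `F(x₁,…,xₙ) = Σᵢ mⁱ q(xᵢ) + (1/4π) Σ_{i≠j} mⁱmʲ/|xᵢ−xⱼ|`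
on `n`-tuples of distinct points of ℝ³ (with `q` a positive-definite quadratic form)
is coercive on its domain and attains its infimum. -/
theorem stmt5 (n : ℕ) (hn : 2 ≤ n) (m : Fin n → ℝ) (hm : ∀ i, 0 < m i)
    (H : Matrix (Fin 3) (Fin 3) ℝ) (hH : H.IsSymm)
    (q : EuclideanSpace ℝ (Fin 3) → ℝ)
    (hq : ∀ x, q x = ∑ k, ∑ l, H k l * x k * x l)
    (C : ℝ) (hC : 0 < C) (hcoer : ∀ x, C * ‖x‖ ^ 2 ≤ q x)
    (F : {x : Fin n → EuclideanSpace ℝ (Fin 3) // ∀ i j, i ≠ j → x i ≠ x j} → ℝ)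
    (hF : ∀ x, F x = (∑ i, m i * q (x.1 i)) +
      (4 * Real.pi)⁻¹ * ∑ i, ∑ j, if i ≠ j then m i * m j / ‖x.1 i - x.1 j‖ else 0) :
    Tendsto F (cocompact _) atTop ∧ ∃ x, ∀ y, F x ≤ F y :=
  stmt5_general n m hm H q hq C hC hcoer F hF
end
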